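/- The Gneiting covariance function c(s,t,s′,t′) = σ²/(a|t−t′|^{2α}+1)^τ · exp(−c₀‖s−s′‖^{2γ}/(a|t−t′|^{2α}+1)^{βγ}) factors as a product c₁(s,s′)·c₂(t,t′) of a purely spatial and a purely temporal function if and only if β = 0 (given σ², a, c₀ > 0, α, γ ∈ (0,1], τ > 0, and nondegenerate domains). -/
import Mathlib


noncomputable section

/-- The Gneiting space-time covariance function. -/
def gneiting {d : ℕ} (σ2 a c0 α γ τ β : ℝ)
    (s : EuclideanSpace ℝ (Fin d)) (t : ℝ) (s' : EuclideanSpace ℝ (Fin d)) (t' : ℝ) : ℝ :=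
  σ2 / (a * |t - t'| ^ (2 * α) + 1) ^ τ *
    Real.exp (-(c0 * ‖s - s'‖ ^ (2 * γ)) / (a * |t - t'| ^ (2 * α) + 1) ^ (β * γ))

private lemma rpow_inj_aux {x y p : ℝ} (hx : 0 ≤ x) (hy : 0 ≤ y) (hp : 0 < p)
    (h : x ^ p = y ^ p) : x = y := by
  rcases lt_trichotomy x y with h' | h' | h'
  · exact absurd h (ne_of_lt (Real.rpow_lt_rpow hx h' hp))
  · exact h'
  · exact absurd h.symm (ne_of_lt (Real.rpow_lt_rpow hy h' hp))

/-- the Gneiting covariance function factors as `c₁(s,s')·c₂(t,t')` on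
nondegenerate domains (each containing two pairs of points at distinct distances)
if and only if the separability parameter `β` is zero. -/
theorem stmt17 {d : ℕ} (S : Set (EuclideanSpace ℝ (Fin d))) (T : Set ℝ)
    (σ2 a c0 α γ τ β : ℝ)
    (hσ : 0 < σ2) (ha : 0 < a) (hc0 : 0 < c0)
    (hα : α ∈ Set.Ioc (0 : ℝ) 1) (hγ : γ ∈ Set.Ioc (0 : ℝ) 1) (hτ : 0 < τ)
    (hβ : β ∈ Set.Icc (0 : ℝ) 1)
    (hS : ∃ s₁ ∈ S, ∃ s₂ ∈ S, ∃ s₃ ∈ S, ∃ s₄ ∈ S, dist s₁ s₂ ≠ dist s₃ s₄)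
    (hT : ∃ t₁ ∈ T, ∃ t₂ ∈ T, ∃ t₃ ∈ T, ∃ t₄ ∈ T, dist t₁ t₂ ≠ dist t₃ t₄) :
    (∃ (c₁ : EuclideanSpace ℝ (Fin d) → EuclideanSpace ℝ (Fin d) → ℝ) (c₂ : ℝ → ℝ → ℝ),
        ∀ s ∈ S, ∀ s' ∈ S, ∀ t ∈ T, ∀ t' ∈ T,
          gneiting σ2 a c0 α γ τ β s t s' t' = c₁ s s' * c₂ t t') ↔ β = 0 := by
  constructor
  · rintro ⟨c₁, c₂, h⟩
    obtain ⟨s₁, hs₁, s₂, hs₂, s₃, hs₃, s₄, hs₄, hsd⟩ := hS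
    obtain ⟨t₁, ht₁, t₂, ht₂, t₃, ht₃, t₄, ht₄, htd⟩ := hT
    set r1 := ‖s₁ - s₂‖ with hr1
    set r2 := ‖s₃ - s₄‖ with hr2
    set u1 := |t₁ - t₂| with hu1
    set u2 := |t₃ - t₄| with hu2
    have hr1r2 : r1 ≠ r2 := by
      simpa [dist_eq_norm] using hsd
    have hu1u2 : u1 ≠ u2 := by
      simpa [Real.dist_eq] using htd
    set D1 := a * u1 ^ (2 * α) + 1 with hD1
    set D2 := a * u2 ^ (2 * α) + 1 with hD2
    have hD1pos : 0 < D1 := by positivity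
    have hD2pos : 0 < D2 := by positivity
    set E1 := D1 ^ (β * γ) with hE1
    set E2 := D2 ^ (β * γ) with hE2
    have hE1pos : 0 < E1 := Real.rpow_pos_of_pos hD1pos _
    have hE2pos : 0 < E2 := Real.rpow_pos_of_pos hD2pos _
    set P1 := c0 * r1 ^ (2 * γ) with hP1
    set P2 := c0 * r2 ^ (2 * γ) with hP2
    have key : gneiting σ2 a c0 α γ τ β s₁ t₁ s₂ t₂ * gneiting σ2 a c0 α γ τ β s₃ t₃ s₄ t₄
        = gneiting σ2 a c0 α γ τ β s₁ t₃ s₂ t₄ * gneiting σ2 a c0 α γ τ β s₃ t₁ s₄ t₂ := by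
      rw [h s₁ hs₁ s₂ hs₂ t₁ ht₁ t₂ ht₂, h s₃ hs₃ s₄ hs₄ t₃ ht₃ t₄ ht₄,
        h s₁ hs₁ s₂ hs₂ t₃ ht₃ t₄ ht₄, h s₃ hs₃ s₄ hs₄ t₁ ht₁ t₂ ht₂]
      ring
    simp only [gneiting, ← hr1, ← hr2, ← hu1, ← hu2, ← hD1, ← hD2, ← hE1, ← hE2,
      ← hP1, ← hP2] at key
    have hA1 : (0:ℝ) < D1 ^ τ := Real.rpow_pos_of_pos hD1pos _
    have hA2 : (0:ℝ) < D2 ^ τ := Real.rpow_pos_of_pos hD2pos _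
    have key2 : Real.exp (-P1 / E1) * Real.exp (-P2 / E2)
        = Real.exp (-P1 / E2) * Real.exp (-P2 / E1) := by
      have hne : σ2 / D1 ^ τ * (σ2 / D2 ^ τ) ≠ 0 := by positivity
      apply mul_left_cancel₀ hne
      linear_combination key
    rw [← Real.exp_add, ← Real.exp_add, Real.exp_eq_exp] at key2
    have key3 : (P1 - P2) * (E1 - E2) = 0 := by
      have c1 : -P1 / E1 * E1 = -P1 := div_mul_cancel₀ _ hE1pos.ne'
      have c2 : -P2 / E2 * E2 = -P2 := div_mul_cancel₀ _ hE2pos.ne'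
      have c3 : -P1 / E2 * E2 = -P1 := div_mul_cancel₀ _ hE2pos.ne'
      have c4 : -P2 / E1 * E1 = -P2 := div_mul_cancel₀ _ hE1pos.ne'
      linear_combination E1 * E2 * key2 - E2 * c1 - E1 * c2 + E1 * c3 + E2 * c4
    have hP : P1 ≠ P2 := by
      intro hP
      apply hr1r2
      have hPP : c0 * r1 ^ (2 * γ) = c0 * r2 ^ (2 * γ) := by rw [← hP1, ← hP2, hP]
      have : r1 ^ (2 * γ) = r2 ^ (2 * γ) := mul_left_cancel₀ hc0.ne' hPP
      exact rpow_inj_aux (norm_nonneg _) (norm_nonneg _) (by linarith [hγ.1]) this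
    have hE : E1 = E2 := by
      rcases mul_eq_zero.1 key3 with h' | h'
      · exact absurd (by linarith : P1 = P2) hP
      · linarith
    by_contra hβ0
    have hβpos : 0 < β := lt_of_le_of_ne hβ.1 (Ne.symm hβ0)
    have hβγ : 0 < β * γ := mul_pos hβpos hγ.1
    have hD : D1 = D2 := rpow_inj_aux hD1pos.le hD2pos.le hβγ hE
    apply hu1u2
    have hu : u1 ^ (2 * α) = u2 ^ (2 * α) := by
      have : a * u1 ^ (2 * α) = a * u2 ^ (2 * α) := by
        rw [hD1, hD2] at hD; linarith
      exact mul_left_cancel₀ ha.ne' this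
    exact rpow_inj_aux (abs_nonneg _) (abs_nonneg _) (by linarith [hα.1]) hu
  · rintro rfl
    refine ⟨fun s s' => Real.exp (-(c0 * ‖s - s'‖ ^ (2 * γ))),
      fun t t' => σ2 / (a * |t - t'| ^ (2 * α) + 1) ^ τ, fun s _ s' _ t _ t' _ => ?_⟩
    simp [gneiting, Real.rpow_zero]
    ring
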